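/- The ring homomorphism ℤ[X'] → ℤ[X]/(I₀ + (f₁)) determined by x ↦ x̄, y ↦ ȳ, z ↦ z̄₊, z' ↦ z̄₋, and w_{m,η} ↦ w̄_{m,η} for all m ≥ 1 and η ∈ k̄, induces a ring isomorphism ℤ[X']/J ≅ ℤ[X]/(I₀ + (f₁)), where (f₁) denotes the ideal of ℤ[X] generated by f₁(x,y) and bars denote images in ℤ[X]/(I₀ + (f₁)). -/

import Mathlib

open MvPolynomial

/- The set of variables `X = {x, y, z₊, z₋} ∪ {w_{m,η} | m ≥ 1, η ∈ k̄}`, where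
`k̄ = k ∪ {∞}` is encoded as `Option k` (with `none` playing the role of `∞`).
The variables `x, y, z₊, z₋` are `Sum.inl 0, Sum.inl 1, Sum.inl 2, Sum.inl 3`,
and `w_{m,η}` is `Sum.inr (m, η)`. -/
abbrev BigVar (k : Type*) := Fin 4 ⊕ (ℕ+ × Option k)

/-- The variable `w_{m,η}` of `ℤ[X]`. -/
noncomputable def W {k : Type*} (m : ℕ+) (η : Option k) : MvPolynomial (BigVar k) ℤ :=
  X (Sum.inr (m, η))

/-- `f₁(x,y) = ∑_{i=0}^{c(n-2)} (-1)^i binom(n-1-i, i) x^i y^{n-1-2i}`,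
where `c(t) = ⌊(t+1)/2⌋`, viewed in `ℤ[x, y, z₊, z₋] = MvPolynomial (Fin 4) ℤ`. -/
noncomputable def f1 (n : ℕ) : MvPolynomial (Fin 4) ℤ :=
  ∑ i ∈ Finset.range ((n - 1) / 2 + 1),
    C ((-1 : ℤ) ^ i * (Nat.choose (n - 1 - i) i : ℤ)) * X 0 ^ i * X 1 ^ (n - 1 - 2 * i)

/-- `f₂(x,y) = ∑_{i=0}^{c(n-1)} (-1)^i (n/(n-i)) binom(n-i, i) x^i y^{n-2i} - 2`
(each coefficient `n/(n-i) · binom(n-i, i)` is an integer). -/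
noncomputable def f2 (n : ℕ) : MvPolynomial (Fin 4) ℤ :=
  (∑ i ∈ Finset.range (n / 2 + 1),
    C ((-1 : ℤ) ^ i * ((n * Nat.choose (n - i) i / (n - i) : ℕ) : ℤ)) *
      X 0 ^ i * X 1 ^ (n - 2 * i)) - 2

/-- `f₃(x,y) = ∑_{i=1}^{c(n-2)} (-1)^{i-1} binom(n-i-2, i-1) x^{i+1} y^{n-1-2i}`. -/
noncomputable def f3 (n : ℕ) : MvPolynomial (Fin 4) ℤ :=
  ∑ i ∈ Finset.Icc 1 ((n - 1) / 2),
    C ((-1 : ℤ) ^ (i - 1) * (Nat.choose (n - i - 2) (i - 1) : ℤ)) *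
      X 0 ^ (i + 1) * X 1 ^ (n - 1 - 2 * i)

/-- `f₄(x,y) = ∑_{i=1}^{c(n-1)} (-1)^{i-1} binom(n-i-1, i-1) x^i y^{n-2i}`. -/
noncomputable def f4 (n : ℕ) : MvPolynomial (Fin 4) ℤ :=
  ∑ i ∈ Finset.Icc 1 (n / 2),
    C ((-1 : ℤ) ^ (i - 1) * (Nat.choose (n - i - 1) (i - 1) : ℤ)) *
      X 0 ^ i * X 1 ^ (n - 2 * i)

/-- The canonical inclusion `ℤ[x, y, z₊, z₋] → ℤ[X]` of polynomial rings. -/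
noncomputable def incl (k : Type*) :
    MvPolynomial (Fin 4) ℤ →+* MvPolynomial (BigVar k) ℤ :=
  (rename (Sum.inl : Fin 4 → BigVar k)).toRingHom

/-- `f₁, f₂, f₃, f₄` viewed inside `ℤ[X]`. -/
noncomputable def F1 (n : ℕ) (k : Type*) : MvPolynomial (BigVar k) ℤ := incl k (f1 n)
noncomputable def F2 (n : ℕ) (k : Type*) : MvPolynomial (BigVar k) ℤ := incl k (f2 n)
noncomputable def F3 (n : ℕ) (k : Type*) : MvPolynomial (BigVar k) ℤ := incl k (f3 n)
noncomputable def F4 (n : ℕ) (k : Type*) : MvPolynomial (BigVar k) ℤ := incl k (f4 n)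

/-- The ideal `I₀` of `ℤ[X]`, generated by `x^n - 1`; `f₁f₂`;
`z₊z₋ - 1 - f₁(2y + 4f₃)`; `f₁(z₊ - 1 - 2f₄)`; `f₁(z₊ - z₋)`;
`f₁(w_{m,η} - m - m f₄)`; `(z₊ - f₄)w_{m,η} - m x f₁²`; `(z₋ - f₄)w_{m,η} - m f₁(y + f₃)`;
`w_{m,η}w_{s,α} - m s x f₁²` for `η ≠ α`; and
`w_{m,η}(w_{t,η} - 1 - f₄) - (t-1) m x f₁²` for `m ≤ t`. -/
noncomputable def idealI0 (n : ℕ) (k : Type*) : Ideal (MvPolynomial (BigVar k) ℤ) :=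
  Ideal.span
    (({X (Sum.inl 0) ^ n - 1,
       F1 n k * F2 n k,
       X (Sum.inl 2) * X (Sum.inl 3) - 1 - F1 n k * (2 * X (Sum.inl 1) + 4 * F3 n k),
       F1 n k * (X (Sum.inl 2) - 1 - 2 * F4 n k),
       F1 n k * (X (Sum.inl 2) - X (Sum.inl 3))} :
      Set (MvPolynomial (BigVar k) ℤ)) ∪
     {p | ∃ (m : ℕ+) (η : Option k),
       p = F1 n k * (W m η - C ((m : ℕ) : ℤ) - C ((m : ℕ) : ℤ) * F4 n k)} ∪
     {p | ∃ (m : ℕ+) (η : Option k),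
       p = (X (Sum.inl 2) - F4 n k) * W m η - C ((m : ℕ) : ℤ) * X (Sum.inl 0) * F1 n k ^ 2} ∪
     {p | ∃ (m : ℕ+) (η : Option k),
       p = (X (Sum.inl 3) - F4 n k) * W m η -
         C ((m : ℕ) : ℤ) * F1 n k * (X (Sum.inl 1) + F3 n k)} ∪
     {p | ∃ (m s : ℕ+) (η α : Option k), η ≠ α ∧
       p = W m η * W s α - C ((m : ℕ) : ℤ) * C ((s : ℕ) : ℤ) * X (Sum.inl 0) * F1 n k ^ 2} ∪
     {p | ∃ (m t : ℕ+) (η : Option k), m ≤ t ∧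
       p = W m η * (W t η - 1 - F4 n k) -
         C (((t : ℕ) - 1 : ℕ) : ℤ) * C ((m : ℕ) : ℤ) * X (Sum.inl 0) * F1 n k ^ 2})

/- The polynomial ring `ℤ[X']` in the variables `X' = {x, y, z, z'} ∪ {w_{m,η}}` is encoded
by the same variable type `BigVar k`, with `x = X (Sum.inl 0)`, `y = X (Sum.inl 1)`,
`z = X (Sum.inl 2)`, `z' = X (Sum.inl 3)` (the variable `z'` playing the role of `z⁻¹`). -/

/-- The ideal `J` of `ℤ[X']` generated by `x^n - 1`; `f₁(x,y)`; `zz' - 1`;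
`(z - f₄(x,y))w_{m,η}`; `(z - z')w_{m,η}`; `w_{m,η}w_{s,α}` for `η ≠ α`; and
`w_{m,η}(w_{t,η} - 1 - f₄(x,y))` for `m ≤ t`. -/
noncomputable def idealJ (n : ℕ) (k : Type*) : Ideal (MvPolynomial (BigVar k) ℤ) :=
  Ideal.span
    (({X (Sum.inl 0) ^ n - 1,
       F1 n k,
       X (Sum.inl 2) * X (Sum.inl 3) - 1} :
      Set (MvPolynomial (BigVar k) ℤ)) ∪
     {p | ∃ (m : ℕ+) (η : Option k), p = (X (Sum.inl 2) - F4 n k) * W m η} ∪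
     {p | ∃ (m : ℕ+) (η : Option k), p = (X (Sum.inl 2) - X (Sum.inl 3)) * W m η} ∪
     {p | ∃ (m s : ℕ+) (η α : Option k), η ≠ α ∧ p = W m η * W s α} ∪
     {p | ∃ (m t : ℕ+) (η : Option k), m ≤ t ∧ p = W m η * (W t η - 1 - F4 n k)})

/-! Modulo `f₁`, each generator of `I₀` reduces to `0` or to a generator of `J`, except
`(z₋ - f₄) w_{m,η}`, which is `(z₊ - f₄) w_{m,η} - (z₊ - z₋) w_{m,η}`; conversely
`(z₊ - z₋) w_{m,η}` is a difference of two reduced generators of `I₀`. Since `f₁ ∈ J`,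
the ideals `J` and `I₀ + (f₁)` coincide, and the quotients are literally the same ring. -/

lemma Ideal.mem_sup_span_singleton_of_eq_add_mul {R : Type*} [CommRing R] {I : Ideal R}
    {a b f : R} (c : R) (ha : a ∈ I) (hb : b = a + c * f) : b ∈ I ⊔ Ideal.span {f} :=
  hb ▸ Submodule.add_mem_sup ha (Ideal.mul_mem_left _ c (Ideal.mem_span_singleton_self f))

section Generators

variable {n : ℕ} {k : Type*}

lemma F1_mem_idealJ : F1 n k ∈ idealJ n k :=
  Ideal.subset_span (by simp)

lemma X_pow_sub_one_mem_idealJ : X (Sum.inl 0) ^ n - 1 ∈ idealJ n k :=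
  Ideal.subset_span (by simp)

lemma X_mul_X_sub_one_mem_idealJ : X (Sum.inl 2) * X (Sum.inl 3) - 1 ∈ idealJ n k :=
  Ideal.subset_span (by simp)

lemma sub_F4_mul_W_mem_idealJ (m : ℕ+) (η : Option k) :
    (X (Sum.inl 2) - F4 n k) * W m η ∈ idealJ n k :=
  Ideal.subset_span <| .inl <| .inl <| .inl <| .inr ⟨m, η, rfl⟩

lemma sub_X_mul_W_mem_idealJ (m : ℕ+) (η : Option k) :
    (X (Sum.inl 2) - X (Sum.inl 3)) * W m η ∈ idealJ n k :=
  Ideal.subset_span <| .inl <| .inl <| .inr ⟨m, η, rfl⟩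

lemma W_mul_W_mem_idealJ {m s : ℕ+} {η α : Option k} (h : η ≠ α) :
    W m η * W s α ∈ idealJ n k :=
  Ideal.subset_span <| .inl <| .inr ⟨m, s, η, α, h, rfl⟩

lemma W_mul_W_sub_mem_idealJ {m t : ℕ+} (η : Option k) (h : m ≤ t) :
    W m η * (W t η - 1 - F4 n k) ∈ idealJ n k :=
  Ideal.subset_span <| .inr ⟨m, t, η, h, rfl⟩

end Generators

lemma idealI0_le_idealJ (n : ℕ) (k : Type*) : idealI0 n k ≤ idealJ n k := by
  have hF1_sq : F1 n k ^ 2 ∈ idealJ n k := Ideal.pow_mem_of_mem _ F1_mem_idealJ 2 two_pos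
  rw [idealI0, Ideal.span_le]
  intro p hp
  simp only [Set.mem_union, Set.mem_insert_iff, Set.mem_singleton_iff, Set.mem_ofPred_eq] at hp
  rcases hp with (((((rfl | rfl | rfl | rfl | rfl) | ⟨m, η, rfl⟩) | ⟨m, η, rfl⟩) | ⟨m, η, rfl⟩) |
    ⟨m, s, η, α, hηα, rfl⟩) | ⟨m, t, η, hmt, rfl⟩
  · exact X_pow_sub_one_mem_idealJ
  · exact Ideal.mul_mem_right _ _ F1_mem_idealJ
  · exact sub_mem X_mul_X_sub_one_mem_idealJ (Ideal.mul_mem_right _ _ F1_mem_idealJ)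
  · exact Ideal.mul_mem_right _ _ F1_mem_idealJ
  · exact Ideal.mul_mem_right _ _ F1_mem_idealJ
  · exact Ideal.mul_mem_right _ _ F1_mem_idealJ
  · exact sub_mem (sub_F4_mul_W_mem_idealJ m η) (Ideal.mul_mem_left _ _ hF1_sq)
  · rw [show (X (Sum.inl 3) - F4 n k) * W m η
          - C ((m : ℕ) : ℤ) * F1 n k * (X (Sum.inl 1) + F3 n k)
        = (X (Sum.inl 2) - F4 n k) * W m η - (X (Sum.inl 2) - X (Sum.inl 3)) * W m η
          - C ((m : ℕ) : ℤ) * (X (Sum.inl 1) + F3 n k) * F1 n k by ring]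
    exact sub_mem (sub_mem (sub_F4_mul_W_mem_idealJ m η) (sub_X_mul_W_mem_idealJ m η))
      (Ideal.mul_mem_left _ _ F1_mem_idealJ)
  · exact sub_mem (W_mul_W_mem_idealJ hηα) (Ideal.mul_mem_left _ _ hF1_sq)
  · exact sub_mem (W_mul_W_sub_mem_idealJ η hmt) (Ideal.mul_mem_left _ _ hF1_sq)

lemma idealJ_le_idealI0_sup_span_F1 (n : ℕ) (k : Type*) :
    idealJ n k ≤ idealI0 n k ⊔ Ideal.span {F1 n k} := by
  rw [idealJ, Ideal.span_le]
  intro p hp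
  simp only [Set.mem_union, Set.mem_insert_iff, Set.mem_singleton_iff, Set.mem_ofPred_eq] at hp
  rcases hp with ((((rfl | rfl | rfl) | ⟨m, η, rfl⟩) | ⟨m, η, rfl⟩) | ⟨m, s, η, α, hηα, rfl⟩) |
    ⟨m, t, η, hmt, rfl⟩
  · exact Ideal.mem_sup_left (Ideal.subset_span (by simp))
  · exact Ideal.mem_sup_right (Ideal.mem_span_singleton_self _)
  · exact Ideal.mem_sup_span_singleton_of_eq_add_mul (2 * X (Sum.inl 1) + 4 * F3 n k)
      (a := X (Sum.inl 2) * X (Sum.inl 3) - 1 - F1 n k * (2 * X (Sum.inl 1) + 4 * F3 n k))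
      (Ideal.subset_span (by simp)) (by ring)
  · exact Ideal.mem_sup_span_singleton_of_eq_add_mul (C ((m : ℕ) : ℤ) * X (Sum.inl 0) * F1 n k)
      (Ideal.subset_span <| .inl <| .inl <| .inl <| .inr ⟨m, η, rfl⟩) (by ring)
  · exact Ideal.mem_sup_span_singleton_of_eq_add_mul
      (C ((m : ℕ) : ℤ) * X (Sum.inl 0) * F1 n k - C ((m : ℕ) : ℤ) * (X (Sum.inl 1) + F3 n k))
      (sub_mem (Ideal.subset_span <| .inl <| .inl <| .inl <| .inr ⟨m, η, rfl⟩)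
        (Ideal.subset_span <| .inl <| .inl <| .inr ⟨m, η, rfl⟩)) (by ring)
  · exact Ideal.mem_sup_span_singleton_of_eq_add_mul
      (C ((m : ℕ) : ℤ) * C ((s : ℕ) : ℤ) * X (Sum.inl 0) * F1 n k)
      (Ideal.subset_span <| .inl <| .inr ⟨m, s, η, α, hηα, rfl⟩) (by ring)
  · exact Ideal.mem_sup_span_singleton_of_eq_add_mul
      (C (((t : ℕ) - 1 : ℕ) : ℤ) * C ((m : ℕ) : ℤ) * X (Sum.inl 0) * F1 n k)
      (Ideal.subset_span <| .inr ⟨m, t, η, hmt, rfl⟩) (by ring)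

lemma idealJ_eq_idealI0_add_span_F1 (n : ℕ) (k : Type*) :
    idealJ n k = idealI0 n k + Ideal.span {F1 n k} :=
  (idealJ_le_idealI0_sup_span_F1 n k).antisymm
    (sup_le (idealI0_le_idealJ n k) (Ideal.span_singleton_le_iff_mem _ |>.2 F1_mem_idealJ))

theorem stable_green_ring_iso_general (n : ℕ) (k : Type*) :
    ∃ e : (MvPolynomial (BigVar k) ℤ ⧸ idealJ n k) ≃+*
        (MvPolynomial (BigVar k) ℤ ⧸ (idealI0 n k + Ideal.span {F1 n k})),
      ∀ v : BigVar k,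
        e (Ideal.Quotient.mk (idealJ n k) (X v)) =
          Ideal.Quotient.mk (idealI0 n k + Ideal.span {F1 n k}) (X v) :=
  ⟨Ideal.quotEquivOfEq (idealJ_eq_idealI0_add_span_F1 n k),
    fun v => Ideal.quotEquivOfEq_mk _ (X v)⟩

/-- (Corollary 3.11.) The ring homomorphism `ℤ[X'] → ℤ[X]/(I₀ + (f₁))` determined by
`x ↦ x̄`, `y ↦ ȳ`, `z ↦ z̄₊`, `z' ↦ z̄₋` and `w_{m,η} ↦ w̄_{m,η}` induces a ring
isomorphism `ℤ[X']/J ≅ ℤ[X]/(I₀ + (f₁))`: there is a ring isomorphism sending the class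
of each variable of `ℤ[X']` to the class in `ℤ[X]/(I₀ + (f₁))` of the corresponding
variable of `ℤ[X]`. -/
theorem stable_green_ring_iso (n : ℕ) (hn : 2 < n) (k : Type*) [Field k] [IsAlgClosed k]
    (q : k) (hq : orderOf q = n) :
    ∃ e : (MvPolynomial (BigVar k) ℤ ⧸ idealJ n k) ≃+*
        (MvPolynomial (BigVar k) ℤ ⧸ (idealI0 n k + Ideal.span {F1 n k})),
      ∀ v : BigVar k,
        e (Ideal.Quotient.mk (idealJ n k) (X v)) =
          Ideal.Quotient.mk (idealI0 n k + Ideal.span {F1 n k}) (X v) :=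
  stable_green_ring_iso_general n k
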